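/- arXiv:2103.10903 — 2 statements merged into one kernel-verified Lean document; each statement's English description precedes it below -/
import Mathlib

section
/- If τ_1,...,τ_K satisfy τ_0 c_k/τ_k = 1/λ for all k with ∑_{k=0}^K τ_k = T and c_k > 0, then ∑_{k=1}^K τ_k log(1 + τ_0 c_k / τ_k) = (T − τ_0) log(1 + τ_0 (∑_{k=1}^K c_k)/(T − τ_0)); i.e., under the optimal time-splitting the sum throughput collapses to a single-variable function of τ_0. -/
/-! When all ratios `a i / b i` share a common value, that value is also the mediant
`(∑ a) / (∑ b)`, so `∑ b i * f (a i / b i)` collapses to `(∑ b) * f ((∑ a) / ∑ b)`.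
With `a k = τ₀ c_k`, `b k = τ_k` and `∑ τ_k = T - τ₀` this is the theorem. -/

open Finset

section EqualRatios

variable {ι K : Type*} {s : Finset ι} {a b : ι → K} {r : K}

theorem sum_div_sum_eq_of_forall_div_eq [Field K] (hb : ∀ i ∈ s, b i ≠ 0)
    (hsum : ∑ i ∈ s, b i ≠ 0) (h : ∀ i ∈ s, a i / b i = r) :
    (∑ i ∈ s, a i) / ∑ i ∈ s, b i = r := by
  rw [div_eq_iff hsum, mul_sum]
  refine sum_congr rfl fun i hi => ?_
  rw [← h i hi, div_mul_cancel₀ _ (hb i hi)]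

theorem sum_mul_apply_div_eq_of_forall_div_eq [Field K] [LinearOrder K] [IsStrictOrderedRing K]
    (f : K → K) (hb : ∀ i ∈ s, 0 < b i) (h : ∀ i ∈ s, a i / b i = r) :
    ∑ i ∈ s, b i * f (a i / b i) = (∑ i ∈ s, b i) * f ((∑ i ∈ s, a i) / ∑ i ∈ s, b i) := by
  rcases s.eq_empty_or_nonempty with rfl | hs
  · simp
  have hsum : ∑ i ∈ s, b i ≠ 0 := (sum_pos hb hs).ne'
  rw [sum_div_sum_eq_of_forall_div_eq (fun i hi => (hb i hi).ne') hsum h, sum_mul]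
  exact sum_congr rfl fun i hi => by rw [h i hi]

end EqualRatios

theorem stmt6_general (K : ℕ) (c : Fin K → ℝ)
    (T τ0 : ℝ)
    (τ : Fin K → ℝ) (hτ : ∀ k, 0 < τ k) (lam : ℝ)
    (h1 : ∀ k, τ0 * c k / τ k = 1 / lam)
    (h2 : τ0 + ∑ k, τ k = T) :
    ∑ k, τ k * Real.log (1 + τ0 * c k / τ k)
      = (T - τ0) * Real.log (1 + τ0 * (∑ k, c k) / (T - τ0)) := by
  have hsum : ∑ k, τ k = T - τ0 := by linarith
  rw [mul_sum, ← hsum]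
  exact sum_mul_apply_div_eq_of_forall_div_eq (fun x => Real.log (1 + x))
    (fun k _ => hτ k) (fun k _ => h1 k)

theorem stmt6 (K : ℕ) (c : Fin K → ℝ) (hc : ∀ k, 0 < c k)
    (T τ0 : ℝ) (hτ0 : τ0 ∈ Set.Ioo 0 T)
    (τ : Fin K → ℝ) (hτ : ∀ k, 0 < τ k) (lam : ℝ)
    (h1 : ∀ k, τ0 * c k / τ k = 1 / lam)
    (h2 : τ0 + ∑ k, τ k = T) :
    ∑ k, τ k * Real.log (1 + τ0 * c k / τ k)
      = (T - τ0) * Real.log (1 + τ0 * (∑ k, c k) / (T - τ0)) :=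
  stmt6_general K c T τ0 τ hτ lam h1 h2
end

section
/- Let a > 1 and T > 0, and define f(τ) = (T − τ) log(1 + aτ/(T − τ)) on (0, T). Then f is strictly concave, and its unique maximizer τ* satisfies the equation x log x − x = a − 1 where x = 1 + aτ*/(T − τ*); equivalently x = exp(W((a−1)/e) + 1) with W the Lambert W function, giving τ* = T·(exp(W((a−1)/e)+1) − 1)/(a − 1 + exp(W((a−1)/e)+1)). -/
/-!
Write `x(τ) = 1 + aτ/(T - τ)`. A direct computation gives
`f'(τ) = 1 + (a - 1)/x(τ) - log x(τ)`: a strictly decreasing function of `x` composed with the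
strictly increasing `x(τ)`, so `f'` is strictly decreasing and `f` strictly concave. The stationary
point solves `1 + (a - 1)/x = log x`, i.e. `x log x - x = a - 1`; putting `x = exp (w + 1)` this
becomes `w e^w = (a - 1)/e`, and inverting `x(τ) = x` gives the closed form of `τ*`.
-/

open Real Set

lemma ConcaveOn.isMaxOn_of_hasDerivAt_eq_zero {S : Set ℝ} {f : ℝ → ℝ} {x : ℝ}
    (hf : ConcaveOn ℝ S f) (hx : x ∈ interior S) (hd : HasDerivAt f 0 x) : IsMaxOn f S x := by
  have hmin : IsMinOn (-f) S x := hf.neg.isMinOn_of_rightDeriv_eq_zero hx <| by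
    simpa using hd.neg.hasDerivWithinAt.derivWithin (uniqueDiffWithinAt_Ioi x)
  simpa using hmin.neg

lemma strictAntiOn_one_add_div_sub_log {c : ℝ} (hc : 0 ≤ c) :
    StrictAntiOn (fun x => 1 + c / x - log x) (Ioi 0) := by
  intro x hx y _ hxy
  have hdiv : c / y ≤ c / x := div_le_div_of_nonneg_left hc hx hxy.le
  have hlog : log x < log y := log_lt_log hx hxy
  simp only
  linarith

lemma strictMonoOn_one_add_mul_div_sub {a T : ℝ} (ha : 0 < a) (hT : 0 < T) :
    StrictMonoOn (fun t => 1 + a * t / (T - t)) (Iio T) := by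
  intro s hs t ht hst
  have hs' : 0 < T - s := sub_pos.mpr hs
  have ht' : 0 < T - t := sub_pos.mpr ht
  have : a * s / (T - s) < a * t / (T - t) := by
    rw [div_lt_div_iff₀ hs' ht']
    nlinarith [mul_pos ha hT]
  simpa using this

lemma hasDerivAt_mul_log_one_add_mul_div_sub {a T τ : ℝ} (hτ : τ < T)
    (hx : 0 < 1 + a * τ / (T - τ)) :
    HasDerivAt (fun t => (T - t) * log (1 + a * t / (T - t)))
      (1 + (a - 1) / (1 + a * τ / (T - τ)) - log (1 + a * τ / (T - τ))) τ := by
  have hsub : T - τ ≠ 0 := (sub_pos.mpr hτ).ne'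
  have hlin : HasDerivAt (fun t => T - t) (-1) τ := by
    simpa using (hasDerivAt_id τ).const_sub T
  have hratio : HasDerivAt (fun t => 1 + a * t / (T - t)) (a * T / (T - τ) ^ 2) τ := by
    refine ((((hasDerivAt_id τ).const_mul a).div hlin hsub).const_add 1).congr_deriv ?_
    simp only [id_eq]
    ring
  have hden : T - τ + a * τ ≠ 0 := by
    have := mul_pos hx (sub_pos.mpr hτ)
    field_simp at this
    linarith
  refine (hlin.fun_mul (hratio.log hx.ne')).congr_deriv ?_
  field_simp
  ring

lemma one_add_mul_div_sub_of_eq_div {a T x : ℝ} (ha : a ≠ 0) (hT : T ≠ 0)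
    (hx : a - 1 + x ≠ 0) :
    1 + a * (T * (x - 1) / (a - 1 + x)) / (T - T * (x - 1) / (a - 1 + x)) = x := by
  have hsub : T - T * (x - 1) / (a - 1 + x) = T * a / (a - 1 + x) := by
    field_simp
    ring
  rw [hsub]
  field_simp
  ring

lemma mul_sub_one_div_mem_Ioo {a T x : ℝ} (ha : 0 < a) (hT : 0 < T) (hx : 1 < x) :
    T * (x - 1) / (a - 1 + x) ∈ Ioo 0 T := by
  have hden : 0 < a - 1 + x := by linarith
  constructor
  · exact div_pos (mul_pos hT (sub_pos.mpr hx)) hden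
  · rw [div_lt_iff₀ hden]
    nlinarith

lemma one_lt_one_add_mul_div_sub {a T τ : ℝ} (ha : 0 < a) (hτ : τ ∈ Ioo 0 T) :
    1 < 1 + a * τ / (T - τ) :=
  lt_add_of_pos_right 1 (div_pos (mul_pos ha hτ.1) (sub_pos.mpr hτ.2))

lemma strictConcaveOn_mul_log_one_add_mul_div_sub {a T : ℝ} (ha : 1 ≤ a) (hT : 0 < T) :
    StrictConcaveOn ℝ (Ioo 0 T) (fun τ => (T - τ) * log (1 + a * τ / (T - τ))) := by
  have hratio : ∀ τ ∈ Ioo 0 T, 1 < 1 + a * τ / (T - τ) :=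
    fun τ hτ => one_lt_one_add_mul_div_sub (by linarith) hτ
  have hderiv := fun τ (hτ : τ ∈ Ioo 0 T) =>
    hasDerivAt_mul_log_one_add_mul_div_sub (a := a) hτ.2 (zero_lt_one.trans (hratio τ hτ))
  refine StrictAntiOn.strictConcaveOn_of_deriv (convex_Ioo 0 T)
    (fun τ hτ => (hderiv τ hτ).continuousAt.continuousWithinAt) ?_
  rw [interior_Ioo]
  intro s hs t ht hst
  rw [(hderiv s hs).deriv, (hderiv t ht).deriv]
  exact strictAntiOn_one_add_div_sub_log (sub_nonneg.mpr ha)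
    (zero_lt_one.trans (hratio s hs)) (zero_lt_one.trans (hratio t ht))
    (strictMonoOn_one_add_mul_div_sub (by linarith) hT hs.2 ht.2 hst)

lemma eq_mul_exp_add_one_of_mul_exp_eq_div {c w : ℝ} (hw : w * exp w = c / exp 1) :
    c = w * exp (w + 1) := by
  rw [exp_add, ← mul_assoc, hw, div_mul_cancel₀ _ (exp_pos 1).ne']

theorem stmt9_general (a T : ℝ) (ha : 1 < a) (hT : 0 < T)
    (w : ℝ) (hw2 : w * Real.exp w = (a - 1) / Real.exp 1) :
    StrictConcaveOn ℝ (Set.Ioo 0 T) (fun τ => (T - τ) * Real.log (1 + a * τ / (T - τ))) ∧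
    ∃! τstar : ℝ, τstar ∈ Set.Ioo 0 T ∧
      IsMaxOn (fun τ => (T - τ) * Real.log (1 + a * τ / (T - τ))) (Set.Ioo 0 T) τstar ∧
      (1 + a * τstar / (T - τstar)) * Real.log (1 + a * τstar / (T - τstar))
          - (1 + a * τstar / (T - τstar)) = a - 1 ∧
      1 + a * τstar / (T - τstar) = Real.exp (w + 1) ∧
      τstar = T * (Real.exp (w + 1) - 1) / (a - 1 + Real.exp (w + 1)) := by
  have hconc := strictConcaveOn_mul_log_one_add_mul_div_sub ha.le hT
  have hlambert : a - 1 = w * exp (w + 1) := eq_mul_exp_add_one_of_mul_exp_eq_div hw2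
  have hw : 0 < w := pos_of_mul_pos_left (hlambert ▸ sub_pos.mpr ha) (exp_pos _).le
  have hx₀ : 1 < exp (w + 1) := one_lt_exp_iff.mpr (by linarith)
  set τ₀ := T * (exp (w + 1) - 1) / (a - 1 + exp (w + 1))
  have hτ₀ : τ₀ ∈ Ioo 0 T := mul_sub_one_div_mem_Ioo (by linarith) hT hx₀
  have hx₀_eq : 1 + a * τ₀ / (T - τ₀) = exp (w + 1) :=
    one_add_mul_div_sub_of_eq_div (by linarith) hT.ne' (by linarith)
  have hstationary : 1 + (a - 1) / exp (w + 1) - log (exp (w + 1)) = 0 := by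
    rw [log_exp, hlambert, mul_div_cancel_right₀ _ (exp_pos _).ne']
    ring
  have hmax : IsMaxOn (fun τ => (T - τ) * log (1 + a * τ / (T - τ))) (Ioo 0 T) τ₀ :=
    hconc.concaveOn.isMaxOn_of_hasDerivAt_eq_zero (by rwa [interior_Ioo])
      ((hasDerivAt_mul_log_one_add_mul_div_sub hτ₀.2 (by linarith)).congr_deriv
        (by rw [hx₀_eq, hstationary]))
  refine ⟨hconc, τ₀, ⟨hτ₀, hmax, ?_, hx₀_eq, rfl⟩,
    fun τ h => hconc.eq_of_isMaxOn h.2.1 hmax h.1 hτ₀⟩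
  rw [hx₀_eq, log_exp, hlambert]
  ring

theorem stmt9 (a T : ℝ) (ha : 1 < a) (hT : 0 < T)
    (w : ℝ) (hw1 : -1 ≤ w) (hw2 : w * Real.exp w = (a - 1) / Real.exp 1) :
    StrictConcaveOn ℝ (Set.Ioo 0 T) (fun τ => (T - τ) * Real.log (1 + a * τ / (T - τ))) ∧
    ∃! τstar : ℝ, τstar ∈ Set.Ioo 0 T ∧
      IsMaxOn (fun τ => (T - τ) * Real.log (1 + a * τ / (T - τ))) (Set.Ioo 0 T) τstar ∧
      (1 + a * τstar / (T - τstar)) * Real.log (1 + a * τstar / (T - τstar))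
          - (1 + a * τstar / (T - τstar)) = a - 1 ∧
      1 + a * τstar / (T - τstar) = Real.exp (w + 1) ∧
      τstar = T * (Real.exp (w + 1) - 1) / (a - 1 + Real.exp (w + 1)) :=
  stmt9_general a T ha hT w hw2
end
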